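/- arXiv:2010.08988 — 3 statements merged into one kernel-verified Lean document; each statement's English description precedes it below -/
import Mathlib

section
/- Let D be a minimal obstruction. Then for every edge e ∈ E(D), the digraph D/e is acyclic; and for every vertex v of D that is a source or a sink, the digraph D/E(v) is acyclic, where E(v) denotes the set of edges of D incident with v. -/
open Relation

/-! ## Finite directed multigraphs -/

/-- A finite directed multigraph: finite vertex and edge types together with
tail and head maps (loops and parallel/anti-parallel edges are allowed). -/
structure MultiDigraph : Type 1 where
  V : Type
  E : Type
  [fv : Fintype V]
  [fe : Fintype E]
  [dv : DecidableEq V]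
  [de : DecidableEq E]
  tail : E → V
  head : E → V

attribute [instance] MultiDigraph.fv MultiDigraph.fe MultiDigraph.dv MultiDigraph.de

namespace MultiDigraph

variable (D : MultiDigraph)

/-- The set of edges crossing the partition `(X, Xᶜ)` of the vertex set. -/
def cutAt (X : Set D.V) : Set D.E :=
  {e | (D.tail e ∈ X ∧ D.head e ∉ X) ∨ (D.tail e ∉ X ∧ D.head e ∈ X)}

/-- A cut: a nonempty set of edges of the form `cutAt X`. -/
def IsCut (S : Set D.E) : Prop := S.Nonempty ∧ ∃ X : Set D.V, S = D.cutAt X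

/-- A bond: a cut containing no other cut properly. -/
def IsBond (S : Set D.E) : Prop := D.IsCut S ∧ ∀ S', D.IsCut S' → S' ⊆ S → S' = S

/-- A directed cut: a nonempty cut `cutAt X` such that no edge enters `X`. -/
def IsDirectedCut (S : Set D.E) : Prop :=
  S.Nonempty ∧ ∃ X : Set D.V, S = D.cutAt X ∧ ∀ e : D.E, ¬(D.tail e ∉ X ∧ D.head e ∈ X)

/-- A directed bond: a bond which is a directed cut. -/
def IsDirectedBond (S : Set D.E) : Prop := D.IsBond S ∧ D.IsDirectedCut S

/-- An odd dijoin: an edge set meeting every directed bond an odd number of times. -/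
def IsOddDijoin (J : Set D.E) : Prop := ∀ S : Set D.E, D.IsDirectedBond S → Odd (J ∩ S).ncard

def HasOddDijoin : Prop := ∃ J : Set D.E, D.IsOddDijoin J

/-- One-step relation used for weak connectivity of the subgraph spanned by `A`:
`x` and `y` are joined by an edge of `A`. -/
def touchRel (A : Set D.E) : D.V → D.V → Prop :=
  fun x y => ∃ e ∈ A, D.tail e = x ∧ D.head e = y

/-- Contraction `D/A`: delete the edges of `A` and identify each weak component of `D[A]`. -/
noncomputable def contract (A : Set D.E) : MultiDigraph :=
  letI s := EqvGen.setoid (D.touchRel A)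
  { V := Quotient s
    E := {e : D.E // e ∉ A}
    fv := Fintype.ofFinite _
    fe := Fintype.ofFinite _
    dv := Classical.decEq _
    de := Classical.decEq _
    tail := fun e => Quotient.mk s (D.tail e.1)
    head := fun e => Quotient.mk s (D.head e.1) }

/-- A step of a directed walk. -/
def dstep : D.V → D.V → Prop := fun a b => ∃ e : D.E, D.tail e = a ∧ D.head e = b

/-- A step of a directed walk avoiding a fixed edge `e₀`. -/
def dstepAvoiding (e₀ : D.E) : D.V → D.V → Prop :=
  fun a b => ∃ e : D.E, e ≠ e₀ ∧ D.tail e = a ∧ D.head e = b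

/-- An edge is deletable if it is not a loop and there is a directed path from its tail
to its head not using it. -/
def Deletable (e : D.E) : Prop :=
  D.tail e ≠ D.head e ∧ ReflTransGen (D.dstepAvoiding e) (D.tail e) (D.head e)

/-- Deleting one edge. -/
noncomputable def deleteEdge (e : D.E) : MultiDigraph where
  V := D.V
  E := {f : D.E // f ≠ e}
  fv := D.fv
  fe := Fintype.ofFinite _
  dv := D.dv
  de := Classical.decEq _
  tail := fun f => D.tail f.1
  head := fun f => D.head f.1

/-- An isolated vertex. -/
def Isolated (v : D.V) : Prop := ∀ e : D.E, D.tail e ≠ v ∧ D.head e ≠ v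

/-- Deleting an isolated vertex. -/
noncomputable def deleteVertex (v : D.V) (h : D.Isolated v) : MultiDigraph where
  V := {u : D.V // u ≠ v}
  E := D.E
  fv := Fintype.ofFinite _
  fe := D.fe
  dv := Classical.decEq _
  de := D.de
  tail := fun e => ⟨D.tail e, (h e).1⟩
  head := fun e => ⟨D.head e, (h e).2⟩

/-- A digraph is acyclic if it has no directed cycle. -/
def Acyclic : Prop := ∀ a b : D.V, D.dstep a b → ¬ ReflTransGen D.dstep b a

/-- A step of an undirected walk. -/
def ustep : D.V → D.V → Prop :=
  fun a b => ∃ e : D.E, (D.tail e = a ∧ D.head e = b) ∨ (D.tail e = b ∧ D.head e = a)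

/-- Weak connectivity. -/
def WeaklyConnected : Prop := ∀ a b : D.V, ReflTransGen D.ustep a b

/-- A step of an undirected walk avoiding the vertex `v`. -/
def ustepAvoiding (v : D.V) : D.V → D.V → Prop :=
  fun a b => a ≠ v ∧ b ≠ v ∧ D.ustep a b

/-- The underlying multigraph is 2-vertex-connected. -/
def TwoConnected : Prop :=
  3 ≤ Fintype.card D.V ∧ D.WeaklyConnected ∧
    ∀ v a b : D.V, a ≠ v → b ≠ v → ReflTransGen (D.ustepAvoiding v) a b

/-- `D` is an oriented graph: no loops and no pair of parallel or anti-parallel edges. -/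
def Oriented : Prop :=
  (∀ e : D.E, D.tail e ≠ D.head e) ∧
    ∀ e f : D.E, e ≠ f → ({D.tail e, D.head e} : Set D.V) ≠ {D.tail f, D.head f}

/-- `D` is transitively reduced: no edge of `D` is deletable. -/
def TransitivelyReduced : Prop := ∀ e : D.E, ¬ D.Deletable e

end MultiDigraph

/-! ## Digraph isomorphism -/

/-- An isomorphism of directed multigraphs. -/
structure DigraphIso (D₁ D₂ : MultiDigraph) where
  vmap : D₁.V ≃ D₂.V
  emap : D₁.E ≃ D₂.E
  tail_eq : ∀ e, D₂.tail (emap e) = vmap (D₁.tail e)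
  head_eq : ∀ e, D₂.head (emap e) = vmap (D₁.head e)

def IsIsomorphic (D₁ D₂ : MultiDigraph) : Prop := Nonempty (DigraphIso D₁ D₂)

/-! ## Cut minors -/

/-- A single cut-minor step: contraction of an edge, deletion of a deletable edge, or
deletion of an isolated vertex. -/
inductive CutMinorStep : MultiDigraph → MultiDigraph → Prop
  | contractEdge (D : MultiDigraph) (e : D.E) : CutMinorStep (D.contract {e}) D
  | delEdge (D : MultiDigraph) (e : D.E) (h : D.Deletable e) : CutMinorStep (D.deleteEdge e) D
  | delVertex (D : MultiDigraph) (v : D.V) (h : D.Isolated v) :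
      CutMinorStep (D.deleteVertex v h) D

/-- `D₁` is a cut minor of `D₂`. -/
def IsCutMinor (D₁ D₂ : MultiDigraph) : Prop := ReflTransGen CutMinorStep D₁ D₂

/-- A proper cut minor: a cut minor which is not isomorphic to the digraph itself. -/
def IsProperCutMinor (D₁ D₂ : MultiDigraph) : Prop :=
  IsCutMinor D₁ D₂ ∧ ¬ IsIsomorphic D₁ D₂

/-- A minimal obstruction: a digraph without an odd dijoin all of whose proper cut minors
have an odd dijoin. -/
def MinimalObstruction (D : MultiDigraph) : Prop :=
  ¬ D.HasOddDijoin ∧ ∀ D' : MultiDigraph, IsProperCutMinor D' D → D'.HasOddDijoin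

/-! ## Cycles and forests in the underlying multigraph -/

namespace MultiDigraph

variable (D : MultiDigraph)

/-- `X : D.E → SignType` is the signed incidence vector of a cycle of the underlying
multigraph of `D`, signs recording forward/backward edges of a cyclic traversal. -/
def IsSignedCycle (X : D.E → SignType) : Prop :=
  ∃ n : ℕ, 0 < n ∧ ∃ (v : ZMod n → D.V) (ed : ZMod n → D.E) (dir : ZMod n → Bool),
    Function.Injective v ∧ Function.Injective ed ∧
    (∀ i, (dir i = true → D.tail (ed i) = v i ∧ D.head (ed i) = v (i + 1)) ∧
      (dir i = false → D.tail (ed i) = v (i + 1) ∧ D.head (ed i) = v i)) ∧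
    (∀ i, X (ed i) = if dir i then 1 else -1) ∧
    (∀ f, (∀ i, ed i ≠ f) → X f = 0)

/-- The sub-multigraph spanned by `A` is a forest: it contains no cycle. -/
def IsForestOn (A : Set D.E) : Prop :=
  ¬ ∃ X : D.E → SignType, D.IsSignedCycle X ∧ ∀ e : D.E, X e ≠ 0 → e ∈ A

end MultiDigraph

/-! ## The cut space over 𝔽₂ -/

/-- Indicator vector of a set, over `𝔽₂ = ZMod 2`. -/
noncomputable def eindicator {α : Type} (C : Set α) : α → ZMod 2 := C.indicator 1

namespace MultiDigraph

variable (D : MultiDigraph)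

/-- The cut space of (the underlying multigraph of) `D`: the `𝔽₂`-span of the
indicator vectors of the bonds. -/
noncomputable def cutSpace : Submodule (ZMod 2) (D.E → ZMod 2) :=
  Submodule.span (ZMod 2) (eindicator '' {S : Set D.E | D.IsBond S})

/-- `ℬ` is a basis of the cut space of `D` (a family of edge sets whose indicator
vectors are linearly independent and span the cut space). -/
noncomputable def IsCutSpaceBasis (ℬ : Set (Set D.E)) : Prop :=
  LinearIndependent (ZMod 2) (fun S : ℬ => eindicator (S : Set D.E)) ∧
    Submodule.span (ZMod 2) (eindicator '' ℬ) = D.cutSpace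

end MultiDigraph

/-! ## Special digraphs -/

/-- The digraph `𝒟(n₀,n₁,n₂)`: three layers, with all edges from layer 0 to layer 1 and
from layer 1 to layer 2. -/
def layeredD (n₀ n₁ n₂ : ℕ) : MultiDigraph where
  V := (Fin n₀ ⊕ Fin n₁) ⊕ Fin n₂
  E := (Fin n₀ × Fin n₁) ⊕ (Fin n₁ × Fin n₂)
  tail := Sum.elim (fun p => Sum.inl (Sum.inl p.1)) (fun p => Sum.inl (Sum.inr p.1))
  head := Sum.elim (fun p => Sum.inl (Sum.inr p.2)) (fun p => Sum.inr p.2)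

/-- `K⃗_{m,n}`: the complete bipartite graph oriented from the class of size `m` to the
class of size `n`. -/
def oneDirK (m n : ℕ) : MultiDigraph where
  V := Fin m ⊕ Fin n
  E := Fin m × Fin n
  tail := fun p => Sum.inl p.1
  head := fun p => Sum.inr p.2

/-- A diamond: two hubs and `n` further vertices, each of which is either a source with its
two edges going to the hubs, or a sink with its two edges coming from the hubs
(`σ i = true` meaning `xᵢ` is a source). -/
def diamondD (n : ℕ) (σ : Fin n → Bool) : MultiDigraph where
  V := Fin n ⊕ Fin 2
  E := Fin n × Fin 2
  tail := fun p => if σ p.1 then Sum.inl p.1 else Sum.inr p.2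
  head := fun p => if σ p.1 then Sum.inr p.2 else Sum.inl p.1

/-- The bicycle `C⃡_k`: the cycle of length `k` with every edge replaced by a pair of
anti-parallel directed edges. -/
noncomputable def bicycle (k : ℕ) (hk : k ≠ 0) : MultiDigraph :=
  haveI : NeZero k := ⟨hk⟩
  { V := ZMod k
    E := ZMod k × Bool
    fv := inferInstance
    fe := inferInstance
    dv := inferInstance
    de := inferInstance
    tail := fun p => if p.2 then p.1 else p.1 + 1
    head := fun p => if p.2 then p.1 + 1 else p.1 }

/-- An odd diamond. -/
def IsOddDiamond (D : MultiDigraph) : Prop :=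
  ∃ (n : ℕ) (σ : Fin n → Bool), 3 ≤ n ∧ Odd (n + 2) ∧ IsIsomorphic D (diamondD n σ)

/-- An odd one-direction. -/
def IsOddOneDirection (D : MultiDigraph) : Prop :=
  ∃ m n : ℕ, 2 ≤ m ∧ 2 ≤ n ∧ Odd (m + n) ∧ IsIsomorphic D (oneDirK m n)

/-! ## Symmetric difference of a family of sets -/

/-- The symmetric difference of a finite family of sets. -/
def symmDiffFam {α : Type} {k : ℕ} (F : Fin k → Set α) : Set α :=
  {a | Odd ({i : Fin k | a ∈ F i}).ncard}

/-! ## Oriented matroids -/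

/-- Raw data of an oriented matroid: a finite ground set together with a collection of
signed subsets (encoded as functions to `SignType`). -/
structure PreOM : Type 1 where
  E : Type
  [fe : Fintype E]
  [de : DecidableEq E]
  circuits : Set (E → SignType)

attribute [instance] PreOM.fe PreOM.de

/-- The support of a signed set. -/
def sgnSupport {α : Type} (X : α → SignType) : Set α := {e | X e ≠ 0}

namespace PreOM

/-- The oriented matroid axioms for the collection of signed circuits. -/
def IsOM (M : PreOM) : Prop :=
  (0 : M.E → SignType) ∉ M.circuits ∧
  (∀ X ∈ M.circuits, -X ∈ M.circuits) ∧
  (∀ X ∈ M.circuits, ∀ Y ∈ M.circuits, sgnSupport X ⊆ sgnSupport Y → X = Y ∨ X = -Y) ∧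
  ∀ X ∈ M.circuits, ∀ Y ∈ M.circuits, X ≠ -Y → ∀ e : M.E, X e = 1 → Y e = -1 →
    ∃ Z ∈ M.circuits, (∀ f, Z f = 1 → f ≠ e ∧ (X f = 1 ∨ Y f = 1)) ∧
      ∀ f, Z f = -1 → f ≠ e ∧ (X f = -1 ∨ Y f = -1)

/-- The circuits of the underlying matroid: supports of signed circuits. -/
def UCircuits (M : PreOM) : Set (Set M.E) :=
  {C | ∃ X ∈ M.circuits, C = sgnSupport X}

/-- A directed circuit: the support of a signed circuit with empty negative part. -/
def IsDirectedCircuit (M : PreOM) (C : Set M.E) : Prop :=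
  ∃ X ∈ M.circuits, (∀ e, X e ≠ -1) ∧ C = {e | X e = 1}

/-- Independent sets of the underlying matroid. -/
def Indep (M : PreOM) (I : Set M.E) : Prop := ∀ C ∈ M.UCircuits, ¬ C ⊆ I

/-- Bases of the underlying matroid. -/
def IsBase (M : PreOM) (B : Set M.E) : Prop :=
  M.Indep B ∧ ∀ B', M.Indep B' → B ⊆ B' → B' = B

/-- Cocircuits of the underlying matroid: minimal sets meeting every base. -/
def IsCocircuit (M : PreOM) (S : Set M.E) : Prop :=
  (∀ B, M.IsBase B → (S ∩ B).Nonempty) ∧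
    ∀ S' : Set M.E, S' ⊂ S → ¬ ∀ B, M.IsBase B → (S' ∩ B).Nonempty

/-- Signed cocircuits: signed sets supported on a cocircuit and orthogonal to every
signed circuit. -/
def IsSignedCocircuit (M : PreOM) (Y : M.E → SignType) : Prop :=
  M.IsCocircuit (sgnSupport Y) ∧
    ∀ X ∈ M.circuits,
      ((∃ e, (Y e = 1 ∧ X e = 1) ∨ (Y e = -1 ∧ X e = -1)) ↔
        (∃ e, (Y e = 1 ∧ X e = -1) ∨ (Y e = -1 ∧ X e = 1)))

/-- An element `e` is butterfly-contractible if there is a cocircuit `S` with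
`(S \ {e}, {e})` a signed cocircuit. -/
def ButterflyContractible (M : PreOM) (e : M.E) : Prop :=
  ∃ Y : M.E → SignType, M.IsSignedCocircuit Y ∧ Y e = -1 ∧ ∀ f, f ≠ e → Y f ≠ -1

/-- Deletion of a set of elements. -/
noncomputable def deleteSet (M : PreOM) (A : Set M.E) : PreOM where
  E := {f : M.E // f ∉ A}
  fe := Fintype.ofFinite _
  de := Classical.decEq _
  circuits := {X : {f : M.E // f ∉ A} → SignType |
    ∃ X' ∈ M.circuits, (∀ a ∈ A, X' a = 0) ∧ ∀ f : {f : M.E // f ∉ A}, X f = X' f.1}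

/-- Contraction of a single element: signed circuits are the support-minimal nonempty
traces of signed circuits. -/
noncomputable def contractElem (M : PreOM) (e : M.E) : PreOM where
  E := {f : M.E // f ≠ e}
  fe := Fintype.ofFinite _
  de := Classical.decEq _
  circuits := {X : {f : M.E // f ≠ e} → SignType |
    X ≠ 0 ∧ ∃ X' ∈ M.circuits, (∀ f : {f : M.E // f ≠ e}, X f = X' f.1) ∧
      ¬ ∃ Z ∈ M.circuits, (sgnSupport Z \ {e}) ⊂ (sgnSupport X' \ {e})}

/-- Isomorphism of (pre-)oriented matroids. -/
def Iso (M N : PreOM) : Prop :=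
  ∃ σ : M.E ≃ N.E, ∀ X : N.E → SignType, X ∈ N.circuits ↔ (X ∘ σ) ∈ M.circuits

/-- A minimal dependent set of a vector configuration. -/
def IsMinimalDep {F : Type} [Field F] {n : ℕ} {E : Type} (φ : E → (Fin n → F))
    (C : Set E) : Prop :=
  ¬ LinearIndependent F (fun e : C => φ e.1) ∧
    ∀ C' : Set E, C' ⊂ C → LinearIndependent F (fun e : C' => φ e.1)

/-- The underlying matroid is regular: representable over every field. -/
def Regular (M : PreOM) : Prop :=
  ∀ (F : Type) [Field F], ∃ (n : ℕ) (φ : M.E → (Fin n → F)),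
    ∀ C : Set M.E, C ∈ M.UCircuits ↔ IsMinimalDep φ C

/-- `M` is non-even: its underlying matroid is regular and some set of elements meets
every directed circuit an odd number of times. -/
def NonEven (M : PreOM) : Prop :=
  M.Regular ∧ ∃ J : Set M.E, ∀ C : Set M.E, M.IsDirectedCircuit C → Odd (J ∩ C).ncard

/-- Totally cyclic: every element lies in a directed circuit. -/
def TotallyCyclic (M : PreOM) : Prop :=
  ∀ e : M.E, ∃ C : Set M.E, M.IsDirectedCircuit C ∧ e ∈ C

/-- Coindependent set: contains no cocircuit. -/
def Coindependent (M : PreOM) (A : Set M.E) : Prop :=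
  ∀ S : Set M.E, M.IsCocircuit S → ¬ S ⊆ A

/-- The circuit space of the underlying (binary) matroid, over `𝔽₂`. -/
noncomputable def circuitSpace (M : PreOM) : Submodule (ZMod 2) (M.E → ZMod 2) :=
  Submodule.span (ZMod 2) (eindicator '' M.UCircuits)

/-- A directed circuit basis: a family of directed circuits whose indicator vectors form a
basis of the circuit space. -/
noncomputable def IsDirectedCircuitBasis (M : PreOM) (ℬ : Set (Set M.E)) : Prop :=
  (∀ C ∈ ℬ, M.IsDirectedCircuit C) ∧
    LinearIndependent (ZMod 2) (fun C : ℬ => eindicator (C : Set M.E)) ∧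
    Submodule.span (ZMod 2) (eindicator '' ℬ) = M.circuitSpace

end PreOM

/-! ## GB-minors -/

/-- A single GB-minor step: deletion of an element, or contraction of a
butterfly-contractible element. -/
inductive GBStep : PreOM → PreOM → Prop
  | del (M : PreOM) (e : M.E) : GBStep (M.deleteSet {e}) M
  | con (M : PreOM) (e : M.E) (h : M.ButterflyContractible e) : GBStep (M.contractElem e) M

/-- `N` is a GB-minor of `M`. -/
def IsGBMinor (N M : PreOM) : Prop := ReflTransGen GBStep N M

/-! ## Oriented matroids from digraphs -/

/-- The oriented bond matroid `M*(D)` of a digraph `D`: signed circuits are the signed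
incidence vectors of the bonds of `D`. -/
def bondOM (D : MultiDigraph) : PreOM where
  E := D.E
  circuits := {X : D.E → SignType | ∃ W : Set D.V, D.IsBond (D.cutAt W) ∧
    ∀ e : D.E, (X e = 1 ↔ (D.tail e ∈ W ∧ D.head e ∉ W)) ∧
      (X e = -1 ↔ (D.head e ∈ W ∧ D.tail e ∉ W))}

/-- The oriented graphic matroid `M(D)` of a digraph `D`: signed circuits are the signed
incidence vectors of the cycles of the underlying multigraph of `D`. -/
def cycleOM (D : MultiDigraph) : PreOM where
  E := D.E
  circuits := {X : D.E → SignType | D.IsSignedCycle X}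

/-!
A minimal obstruction `D` is acyclic and transitively reduced. If an edge `g` lies on a directed
cycle, it lies in no directed cut, so every directed bond of `D` survives as a directed bond of
`D/g`, and an odd dijoin of `D/g` would be one of `D`. If `e` is deletable, every directed bond of
`D` through `e` also contains an edge of the detour from the tail to the head of `e`, so it
survives as a directed bond of `D - e`, and again an odd dijoin of `D - e` would be one of `D`.

A directed cycle of `D/A` lifts to a directed walk of `D` that may jump inside the vertex set `K`
of `A`. As `D` is acyclic, the walk must leave `K` and come back, and when `A` is a single edge or
the star of a source or a sink this exhibits a directed path bypassing an edge of `A`, which is then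
deletable.
-/

namespace MultiDigraph

variable {D : MultiDigraph} {A : Set D.E}

lemma IsDirectedCut.exists_side {S : Set D.E} (hS : D.IsDirectedCut S) :
    ∃ X : Set D.V, (∀ f, f ∈ S ↔ D.tail f ∈ X ∧ D.head f ∉ X) ∧
      ∀ ⦃x y⦄, ReflTransGen D.dstep x y → x ∉ X → y ∉ X := by
  obtain ⟨-, X, rfl, hin⟩ := hS
  refine ⟨X, fun f => ?_, fun x y hxy hx => ?_⟩
  · have := hin f
    change (_ ∧ _) ∨ (_ ∧ _) ↔ _
    tauto
  · induction hxy with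
    | refl => exact hx
    | tail _ hstep ih =>
      obtain ⟨f, rfl, rfl⟩ := hstep
      exact fun hy => hin f ⟨ih, hy⟩

lemma IsDirectedCut.mem_of_reach {S : Set D.E} (hS : D.IsDirectedCut S) {e f : D.E} (hf : f ∈ S)
    (h₁ : ReflTransGen D.dstep (D.tail e) (D.tail f))
    (h₂ : ReflTransGen D.dstep (D.head f) (D.head e)) : e ∈ S := by
  obtain ⟨X, hmem, hclosed⟩ := hS.exists_side
  rw [hmem] at hf ⊢
  exact ⟨by_contra fun h => hclosed h₁ h hf.1, hclosed h₂ hf.2⟩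

lemma IsDirectedCut.not_mem_of_reach {S : Set D.E} (hS : D.IsDirectedCut S) {f : D.E}
    (hcyc : ReflTransGen D.dstep (D.head f) (D.tail f)) : f ∉ S := by
  obtain ⟨X, hmem, hclosed⟩ := hS.exists_side
  rw [hmem]
  exact fun hf => hclosed hcyc hf.2 hf.1

lemma IsBond.preimage {D' : MultiDigraph} {ι : D'.E → D.E} {S : Set D.E} (hS : D.IsBond S)
    (hcut : D'.IsCut (ι ⁻¹' S))
    (hlift : ∀ T', D'.IsCut T' → T' ⊆ ι ⁻¹' S → ∃ T, D.IsCut T ∧ T ⊆ S ∧ ι ⁻¹' T = T') :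
    D'.IsBond (ι ⁻¹' S) := by
  refine ⟨hcut, fun T' hT' hsub => ?_⟩
  obtain ⟨T, hT, hTS, rfl⟩ := hlift T' hT' hsub
  rw [hS.2 T hT hTS]

lemma HasOddDijoin.of_preimage {D' : MultiDigraph} {ι : D'.E → D.E} (hι : Function.Injective ι)
    (hbond : ∀ S, D.IsDirectedBond S → D'.IsDirectedBond (ι ⁻¹' S)) (h : D'.HasOddDijoin) :
    D.HasOddDijoin := by
  obtain ⟨J, hJ⟩ := h
  refine ⟨ι '' J, fun S hS => ?_⟩
  rw [← Set.image_inter_preimage, Set.ncard_image_of_injective _ hι]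
  exact hJ _ (hbond S hS)

variable (D) in
def toContract (A : Set D.E) (x : D.V) : (D.contract A).V :=
  Quotient.mk (EqvGen.setoid (D.touchRel A)) x

lemma toContract_eq_iff {x y : D.V} :
    D.toContract A x = D.toContract A y ↔ EqvGen (D.touchRel A) x y :=
  ⟨Quotient.exact, fun h => Quotient.sound h⟩

lemma cutAt_contract (W : Set (D.contract A).V) :
    (D.contract A).cutAt W = Subtype.val ⁻¹' D.cutAt (D.toContract A ⁻¹' W) :=
  rfl

lemma not_mem_cutAt_preimage_toContract {e : D.E} (he : e ∈ A) (W : Set (D.contract A).V) :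
    e ∉ D.cutAt (D.toContract A ⁻¹' W) := by
  have : D.toContract A (D.tail e) = D.toContract A (D.head e) :=
    toContract_eq_iff.2 (.rel _ _ ⟨e, he, rfl, rfl⟩)
  change ¬((_ ∈ W ∧ _ ∉ W) ∨ (_ ∉ W ∧ _ ∈ W))
  rw [this]
  tauto

lemma mem_iff_of_eqvGen {X : Set D.V} (hX : ∀ e ∈ A, e ∉ D.cutAt X) {x y : D.V}
    (h : EqvGen (D.touchRel A) x y) : x ∈ X ↔ y ∈ X := by
  induction h with
  | rel _ _ hxy =>
    obtain ⟨e, he, rfl, rfl⟩ := hxy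
    have := hX e he
    change ¬((_ ∧ _) ∨ (_ ∧ _)) at this
    tauto
  | refl => rfl
  | symm _ _ _ ih => exact ih.symm
  | trans _ _ _ _ _ ih₁ ih₂ => exact ih₁.trans ih₂

lemma preimage_image_toContract {X : Set D.V} (hX : ∀ e ∈ A, e ∉ D.cutAt X) :
    D.toContract A ⁻¹' (D.toContract A '' X) = X := by
  ext y
  refine ⟨fun ⟨x, hx, hxy⟩ => (mem_iff_of_eqvGen hX (toContract_eq_iff.1 hxy)).1 hx,
    fun hy => ⟨y, hy, rfl⟩⟩

lemma IsDirectedBond.contract {S : Set D.E} (hS : D.IsDirectedBond S) (hAS : ∀ e ∈ A, e ∉ S) :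
    (D.contract A).IsDirectedBond (Subtype.val ⁻¹' S) := by
  obtain ⟨⟨s, hs⟩, X, rfl, hin⟩ := hS.2
  have hX := preimage_image_toContract hAS
  have hcut : (D.contract A).cutAt (D.toContract A '' X) = Subtype.val ⁻¹' D.cutAt X := by
    rw [cutAt_contract, hX]
  have hne : (Subtype.val ⁻¹' D.cutAt X : Set (D.contract A).E).Nonempty :=
    ⟨⟨s, fun hsA => hAS s hsA hs⟩, hs⟩
  refine ⟨hS.1.preimage ⟨hne, _, hcut.symm⟩ ?_, hne, _, hcut.symm, ?_⟩
  · rintro T' ⟨⟨t, ht⟩, W, rfl⟩ hsub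
    refine ⟨D.cutAt (D.toContract A ⁻¹' W), ⟨⟨t.1, ht⟩, _, rfl⟩, fun e he => ?_, rfl⟩
    exact hsub (show (⟨e, fun heA => not_mem_cutAt_preimage_toContract heA W he⟩ :
      (D.contract A).E) ∈ (D.contract A).cutAt W from he)
  · rintro f ⟨h₁, h₂⟩
    change D.toContract A _ ∉ _ at h₁
    change D.toContract A _ ∈ _ at h₂
    rw [← Set.mem_preimage, hX] at h₁ h₂
    exact hin f.1 ⟨h₁, h₂⟩

lemma exists_crossing_of_reach_avoiding {e : D.E} {Y : Set D.V} {x y : D.V}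
    (h : ReflTransGen (D.dstepAvoiding e) x y) (hx : x ∈ Y) (hy : y ∉ Y) :
    ∃ f ≠ e, (D.tail f ∈ Y ∧ D.head f ∉ Y) ∧
      ReflTransGen D.dstep x (D.tail f) ∧ ReflTransGen D.dstep (D.head f) y := by
  have hmono : ∀ a b, D.dstepAvoiding e a b → D.dstep a b := fun _ _ ⟨f, _, hf⟩ => ⟨f, hf⟩
  induction h using Relation.ReflTransGen.head_induction_on with
  | refl => exact absurd hx hy
  | @head a b hab hrest ih =>
    obtain ⟨f, hfe, rfl, rfl⟩ := hab
    by_cases hb : D.head f ∈ Y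
    · obtain ⟨g, hge, hgY, h₁, h₂⟩ := ih hb
      exact ⟨g, hge, hgY, .head ⟨f, rfl, rfl⟩ h₁, h₂⟩
    · exact ⟨f, hfe, ⟨hx, hb⟩, .refl, ReflTransGen.mono hmono _ _ hrest⟩

lemma Deletable.exists_mem_cutAt {e : D.E} (he : D.Deletable e) {Y : Set D.V}
    (heY : e ∈ D.cutAt Y) :
    ∃ f ≠ e, f ∈ D.cutAt Y ∧
      ReflTransGen D.dstep (D.tail e) (D.tail f) ∧ ReflTransGen D.dstep (D.head f) (D.head e) := by
  rcases heY with ⟨h₁, h₂⟩ | ⟨h₁, h₂⟩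
  · obtain ⟨f, hfe, hfY, hf⟩ := exists_crossing_of_reach_avoiding he.2 h₁ h₂
    exact ⟨f, hfe, .inl hfY, hf⟩
  · obtain ⟨f, hfe, hfY, hf⟩ :=
      exists_crossing_of_reach_avoiding (Y := Yᶜ) he.2 h₁ (not_not.2 h₂)
    exact ⟨f, hfe, .inr ⟨hfY.1, not_not.1 hfY.2⟩, hf⟩

lemma IsDirectedBond.deleteEdge {e : D.E} (he : D.Deletable e) {S : Set D.E}
    (hS : D.IsDirectedBond S) : (D.deleteEdge e).IsDirectedBond (Subtype.val ⁻¹' S) := by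
  obtain ⟨⟨s, hs⟩, X, rfl, hin⟩ := hS.2
  have hne : (Subtype.val ⁻¹' D.cutAt X : Set (D.deleteEdge e).E).Nonempty := by
    by_cases hse : s = e
    · subst hse
      obtain ⟨f, hfe, hf, -⟩ := he.exists_mem_cutAt hs
      exact ⟨⟨f, hfe⟩, hf⟩
    · exact ⟨⟨s, hse⟩, hs⟩
  refine ⟨hS.1.preimage ⟨hne, X, rfl⟩ ?_, hne, X, rfl, fun f => hin f.1⟩
  rintro T' ⟨⟨t, ht⟩, Y, rfl⟩ hsub
  refine ⟨D.cutAt Y, ⟨⟨t.1, ht⟩, Y, rfl⟩, fun g hg => ?_, rfl⟩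
  by_cases hge : g = e
  · subst hge
    obtain ⟨f, hfe, hfY, h₁, h₂⟩ := he.exists_mem_cutAt hg
    exact hS.2.mem_of_reach (hsub (show (⟨f, hfe⟩ : (D.deleteEdge g).E) ∈ _ from hfY)) h₁ h₂
  · exact hsub (show (⟨g, hge⟩ : (D.deleteEdge e).E) ∈ _ from hg)

lemma not_isIsomorphic_of_injective {D₁ D₂ : MultiDigraph} {ι : D₁.E → D₂.E}
    (hι : Function.Injective ι) (hns : ¬ Function.Surjective ι) : ¬ IsIsomorphic D₁ D₂ :=
  fun ⟨i⟩ => hns ((Finite.injective_iff_surjective_of_equiv i.emap).1 hι)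

lemma isProperCutMinor_contract (e : D.E) : IsProperCutMinor (D.contract {e}) D :=
  ⟨.single (.contractEdge D e), not_isIsomorphic_of_injective Subtype.val_injective
    fun h => by obtain ⟨f, hf⟩ := h e; exact f.2 hf⟩

lemma isProperCutMinor_deleteEdge {e : D.E} (he : D.Deletable e) :
    IsProperCutMinor (D.deleteEdge e) D :=
  ⟨.single (.delEdge D e he), not_isIsomorphic_of_injective Subtype.val_injective
    fun h => by obtain ⟨f, hf⟩ := h e; exact f.2 hf⟩

end MultiDigraph

namespace MinimalObstruction

open MultiDigraph

variable {D : MultiDigraph}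

lemma acyclic (h : MinimalObstruction D) : D.Acyclic := by
  rintro _ _ ⟨g, rfl, rfl⟩ hcyc
  refine h.1 (HasOddDijoin.of_preimage Subtype.val_injective (fun S hS => hS.contract ?_)
    (h.2 _ (isProperCutMinor_contract g)))
  rintro _ rfl
  exact hS.2.not_mem_of_reach hcyc

lemma transitivelyReduced (h : MinimalObstruction D) :
    D.TransitivelyReduced := fun _ he =>
  h.1 (HasOddDijoin.of_preimage Subtype.val_injective (fun _ hS => hS.deleteEdge he)
    (h.2 _ (isProperCutMinor_deleteEdge he)))

end MinimalObstruction

namespace MultiDigraph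

variable {D : MultiDigraph} {A : Set D.E} {K : Set D.V}

lemma reach_avoiding_or (e : D.E) {x y : D.V} (h : ReflTransGen D.dstep x y) :
    ReflTransGen (D.dstepAvoiding e) x y ∨
      (ReflTransGen D.dstep x (D.tail e) ∧ ReflTransGen D.dstep (D.head e) y) := by
  induction h using Relation.ReflTransGen.head_induction_on with
  | refl => exact .inl .refl
  | head hstep hrest ih =>
    obtain ⟨g, rfl, rfl⟩ := hstep
    by_cases hge : g = e
    · subst hge
      exact .inr ⟨.refl, hrest⟩
    · rcases ih with hw | ⟨h₁, h₂⟩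
      · exact .inl (.head ⟨g, hge, rfl, rfl⟩ hw)
      · exact .inr ⟨.head ⟨g, rfl, rfl⟩ h₁, h₂⟩

lemma Acyclic.deletable (hacy : D.Acyclic) {f g : D.E} (hfg : f ≠ g)
    (h₁ : ReflTransGen D.dstep (D.tail g) (D.tail f))
    (h₂ : ReflTransGen D.dstep (D.head f) (D.head g)) : D.Deletable g := by
  have hf : ¬ ReflTransGen D.dstep (D.head f) (D.tail f) := hacy _ _ ⟨f, rfl, rfl⟩
  rcases reach_avoiding_or g h₁ with p₁ | ⟨-, h₃⟩
  · rcases reach_avoiding_or g h₂ with p₂ | ⟨h₄, -⟩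
    · refine ⟨fun hg => hacy _ _ ⟨g, rfl, rfl⟩ (by rw [hg]), ?_⟩
      exact (p₁.tail ⟨f, hfg, rfl, rfl⟩).trans p₂
    · exact absurd (h₄.trans h₁) hf
  · exact absurd (h₂.trans h₃) hf

lemma eq_of_reach_of_forall_tail_ne {v y : D.V} (hv : ∀ e, D.tail e ≠ v)
    (h : ReflTransGen D.dstep v y) : y = v := by
  rcases h.cases_head with rfl | ⟨_, ⟨e, he, -⟩, -⟩
  · rfl
  · exact absurd he (hv e)

lemma eq_or_mem_of_eqvGen (hA : ∀ f ∈ A, D.tail f ∈ K ∧ D.head f ∈ K)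
    {x y : D.V} (h : EqvGen (D.touchRel A) x y) : x = y ∨ x ∈ K ∧ y ∈ K := by
  induction h with
  | rel _ _ hxy =>
    obtain ⟨f, hf, rfl, rfl⟩ := hxy
    exact .inr (hA f hf)
  | refl => exact .inl rfl
  | symm _ _ _ ih => exact ih.imp Eq.symm And.symm
  | trans _ _ _ _ _ ih₁ ih₂ =>
    rcases ih₁ with rfl | ih₁
    · exact ih₂
    rcases ih₂ with rfl | ih₂
    · exact .inr ih₁
    · exact .inr ⟨ih₁.1, ih₂.2⟩

variable (D) in
/-- The relation by which directed walks of `D/A` lift to `D` when the ends of the edges of `A`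
lie in `K`. -/
def ReachesThrough (K : Set D.V) (a b : D.V) : Prop :=
  ReflTransGen D.dstep a b ∨
    (∃ k ∈ K, ReflTransGen D.dstep a k) ∧ ∃ k ∈ K, ReflTransGen D.dstep k b

namespace ReachesThrough

variable {a b c : D.V}

lemma tail_dstep (h : D.ReachesThrough K a b) (hbc : D.dstep b c) : D.ReachesThrough K a c := by
  rcases h with h | ⟨hK, k, hk, hkb⟩
  · exact .inl (h.tail hbc)
  · exact .inr ⟨hK, k, hk, hkb.tail hbc⟩

lemma of_eqvGen (hA : ∀ f ∈ A, D.tail f ∈ K ∧ D.head f ∈ K)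
    (h : D.ReachesThrough K a b) (hbc : EqvGen (D.touchRel A) b c) :
    D.ReachesThrough K a c := by
  rcases eq_or_mem_of_eqvGen hA hbc with rfl | ⟨hb, hc⟩
  · exact h
  rcases h with h | ⟨hK, -⟩
  · exact .inr ⟨⟨b, hb, h⟩, c, hc, .refl⟩
  · exact .inr ⟨hK, c, hc, .refl⟩

end ReachesThrough

lemma reachesThrough_of_reach_contract (hA : ∀ f ∈ A, D.tail f ∈ K ∧ D.head f ∈ K)
    {q q' : (D.contract A).V} (h : ReflTransGen (D.contract A).dstep q q') {a b : D.V}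
    (ha : D.toContract A a = q) (hb : D.toContract A b = q') : D.ReachesThrough K a b := by
  induction h generalizing b with
  | refl =>
    exact ReachesThrough.of_eqvGen hA (.inl .refl) (toContract_eq_iff.1 (ha.trans hb.symm))
  | tail _ hstep ih =>
    obtain ⟨f, rfl, rfl⟩ := hstep
    exact ((ih rfl).tail_dstep ⟨f.1, rfl, rfl⟩).of_eqvGen hA (toContract_eq_iff.1 hb.symm)

lemma Acyclic.contract (hacy : D.Acyclic) (hA : ∀ f ∈ A, D.tail f ∈ K ∧ D.head f ∈ K)
    (hK : ∀ f ∉ A, ∀ k ∈ K, ∀ k' ∈ K, ReflTransGen D.dstep k (D.tail f) →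
      ReflTransGen D.dstep (D.head f) k' → False) :
    (D.contract A).Acyclic := by
  rintro _ _ ⟨f, rfl, rfl⟩ hcyc
  rcases reachesThrough_of_reach_contract hA hcyc rfl rfl with hw | ⟨⟨k', hk', h₂⟩, k, hk, h₁⟩
  · exact hacy _ _ ⟨f.1, rfl, rfl⟩ hw
  · exact hK f.1 f.2 k hk k' hk' h₁ h₂

lemma TransitivelyReduced.acyclic_contract_singleton (hred : D.TransitivelyReduced)
    (hacy : D.Acyclic) (e : D.E) : (D.contract {e}).Acyclic := by
  refine hacy.contract (K := {D.tail e, D.head e}) (by rintro _ rfl; simp) ?_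
  rintro f hf k hk k' hk' h₁ h₂
  have hcyc : ¬ ReflTransGen D.dstep (D.head f) (D.tail f) := hacy _ _ ⟨f, rfl, rfl⟩
  rcases hk with rfl | rfl <;> rcases hk' with rfl | rfl
  · exact hcyc (h₂.trans h₁)
  · exact hred e (hacy.deletable hf h₁ h₂)
  · exact hacy _ _ ⟨e, rfl, rfl⟩ ((h₁.tail ⟨f, rfl, rfl⟩).trans h₂)
  · exact hcyc (h₂.trans h₁)

lemma TransitivelyReduced.acyclic_contract_star_of_source (hred : D.TransitivelyReduced)
    (hacy : D.Acyclic) {v : D.V} (hv : ∀ e, D.head e ≠ v) :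
    (D.contract {e | D.tail e = v ∨ D.head e = v}).Acyclic := by
  set A := {e | D.tail e = v ∨ D.head e = v}
  have hAv : ∀ g ∈ A, D.tail g = v := fun g hg => hg.resolve_right (hv g)
  have hreach : ∀ k ∈ insert v (D.head '' A), ReflTransGen D.dstep v k := by
    rintro k (rfl | ⟨g, hg, rfl⟩)
    · exact .refl
    · exact .single ⟨g, hAv g hg, rfl⟩
  refine hacy.contract (K := insert v (D.head '' A))
    (fun g hg => ⟨Or.inl (hAv g hg), Or.inr ⟨g, hg, rfl⟩⟩) ?_
  rintro f hf k hk k' hk' h₁ h₂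
  rcases hk' with rfl | ⟨g, hg, rfl⟩
  · exact hacy _ _ ⟨f, rfl, rfl⟩ (h₂.trans ((hreach k hk).trans h₁))
  · refine hred g (hacy.deletable (by rintro rfl; exact hf hg) ?_ h₂)
    rw [hAv g hg]
    exact (hreach k hk).trans h₁

lemma TransitivelyReduced.acyclic_contract_star_of_sink (hred : D.TransitivelyReduced)
    (hacy : D.Acyclic) {v : D.V} (hv : ∀ e, D.tail e ≠ v) :
    (D.contract {e | D.tail e = v ∨ D.head e = v}).Acyclic := by
  set A := {e | D.tail e = v ∨ D.head e = v}
  have hAv : ∀ g ∈ A, D.head g = v := fun g hg => hg.resolve_left (hv g)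
  have hreach : ∀ k ∈ insert v (D.tail '' A), ReflTransGen D.dstep k v := by
    rintro k (rfl | ⟨g, hg, rfl⟩)
    · exact .refl
    · exact .single ⟨g, rfl, hAv g hg⟩
  refine hacy.contract (K := insert v (D.tail '' A))
    (fun g hg => ⟨Or.inr ⟨g, hg, rfl⟩, Or.inl (hAv g hg)⟩) ?_
  rintro f hf k hk k' hk' h₁ h₂
  rcases hk with rfl | ⟨g, hg, rfl⟩
  · exact hf (.inl (eq_of_reach_of_forall_tail_ne hv h₁))
  · refine hred g (hacy.deletable (by rintro rfl; exact hf hg) h₁ ?_)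
    rw [hAv g hg]
    exact h₂.trans (hreach k' hk')

end MultiDigraph

theorem stmt11 (D : MultiDigraph) (h : MinimalObstruction D) :
    (∀ e : D.E, (D.contract {e}).Acyclic) ∧
      ∀ v : D.V, ((∀ e : D.E, D.head e ≠ v) ∨ (∀ e : D.E, D.tail e ≠ v)) →
        (D.contract {e : D.E | D.tail e = v ∨ D.head e = v}).Acyclic := by
  have hacy := h.acyclic
  have hred := h.transitivelyReduced
  refine ⟨hred.acyclic_contract_singleton hacy, fun v hv => ?_⟩
  rcases hv with hsource | hsink
  · exact hred.acyclic_contract_star_of_source hacy hsource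
  · exact hred.acyclic_contract_star_of_sink hacy hsink
end

section
/- Let n₁, n₂ ≥ 1 be integers. Then the digraph 𝒟(n₁,n₂,0) (which is isomorphic to 𝒟(0,n₁,n₂)) has an odd dijoin if and only if min(n₁,n₂) ≤ 1, or n₁, n₂ ≥ 2 and n₁ ≡ n₂ (mod 2). -/
open Relation

/-!
The directed bonds of `𝒟(m,n,0)` are stars: the out-star of a vertex of the first layer (a bond
when `m ≥ 2`, or `m = n = 1`) and the in-star of a vertex of the second layer (a bond when `n ≥ 2`,
or `m = n = 1`). If `m, n ≥ 2`, all `m + n` stars are directed bonds, and counting the edges of an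
odd dijoin by their first-layer and by their second-layer endpoints gives `m ≡ n (mod 2)`.
Conversely, the whole edge set is an odd dijoin when `min(m,n) ≤ 1` or `m, n` are both odd; when
`m, n` are both even, the symmetric difference of the out-star of `a₀` and the in-star of `b₀`
meets every star in one edge, except those two, which it meets in `n - 1` and `m - 1` edges.
-/

open Finset
open scoped symmDiff

theorem Fintype.card_mod_two_eq_of_odd_rows_cols {α β : Type*} [Fintype α] [Fintype β]
    (r : α → β → Prop) [∀ a b, Decidable (r a b)]
    (hrow : ∀ a, Odd #{b | r a b}) (hcol : ∀ b, Odd #{a | r a b}) :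
    Fintype.card α % 2 = Fintype.card β % 2 := by
  have hsum := Finset.sum_card_bipartiteAbove_eq_sum_card_bipartiteBelow r (s := univ) (t := univ)
  have hα := Finset.odd_sum_iff_odd_card_odd (s := univ) fun a => #(univ.bipartiteAbove r a)
  have hβ := Finset.odd_sum_iff_odd_card_odd (s := univ) fun b => #(univ.bipartiteBelow r b)
  simp only [Finset.bipartiteAbove, Finset.bipartiteBelow, hrow, hcol, Finset.filter_true,
    Finset.card_univ] at hsum hα hβ
  rw [hsum, hβ, Nat.odd_iff, Nat.odd_iff] at hα
  omega

theorem MultiDigraph.cutAt_compl (D : MultiDigraph) (X : Set D.V) : D.cutAt Xᶜ = D.cutAt X := by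
  ext e
  simp only [MultiDigraph.cutAt, Set.mem_ofPred_eq, Set.mem_compl_iff, not_not]
  tauto

namespace layeredD

open MultiDigraph

variable {m n : ℕ}

def src (a : Fin m) : (layeredD m n 0).V := Sum.inl (Sum.inl a)

def snk (b : Fin n) : (layeredD m n 0).V := Sum.inl (Sum.inr b)

def edge (a : Fin m) (b : Fin n) : (layeredD m n 0).E := Sum.inl (a, b)

@[simp] lemma tail_edge (a : Fin m) (b : Fin n) : (layeredD m n 0).tail (edge a b) = src a := rfl

@[simp] lemma head_edge (a : Fin m) (b : Fin n) : (layeredD m n 0).head (edge a b) = snk b := rfl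

lemma exists_edge_eq (e : (layeredD m n 0).E) : ∃ a b, edge a b = e :=
  match e with
  | .inl (a, b) => ⟨a, b, rfl⟩
  | .inr (_, z) => z.elim0

@[simp] lemma edge_inj {a a' : Fin m} {b b' : Fin n} :
    edge a b = edge a' b' ↔ a = a' ∧ b = b' :=
  Sum.inl_injective.eq_iff.trans Prod.ext_iff

@[simp] lemma src_inj {a a' : Fin m} : (src a : (layeredD m n 0).V) = src a' ↔ a = a' :=
  ⟨fun h => Sum.inl_injective (Sum.inl_injective h), congrArg src⟩

@[simp] lemma snk_inj {b b' : Fin n} : (snk b : (layeredD m n 0).V) = snk b' ↔ b = b' :=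
  ⟨fun h => Sum.inr_injective (Sum.inl_injective h), congrArg snk⟩

@[simp] lemma snk_ne_src (a : Fin m) (b : Fin n) : (snk b : (layeredD m n 0).V) ≠ src a :=
  fun h => Sum.inr_ne_inl (Sum.inl_injective h)

@[simp] lemma src_ne_snk (a : Fin m) (b : Fin n) : (src a : (layeredD m n 0).V) ≠ snk b :=
  (snk_ne_src a b).symm

def outStar (a : Fin m) : Set (layeredD m n 0).E := Set.range (edge a)

def inStar (b : Fin n) : Set (layeredD m n 0).E := Set.range (edge · b)

@[simp] lemma edge_mem_outStar {a a' : Fin m} {b : Fin n} : edge a b ∈ outStar a' ↔ a = a' := by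
  simp [outStar, eq_comm]

@[simp] lemma edge_mem_inStar {a : Fin m} {b b' : Fin n} : edge a b ∈ inStar b' ↔ b = b' := by
  simp [inStar, eq_comm]

lemma edge_mem_cutAt {X : Set (layeredD m n 0).V} {a : Fin m} {b : Fin n} :
    edge a b ∈ (layeredD m n 0).cutAt X ↔ (src a ∈ X ↔ snk b ∉ X) := by
  simp only [cutAt, Set.mem_ofPred_eq, tail_edge, head_edge]
  tauto

lemma cutAt_src (a : Fin m) : (layeredD m n 0).cutAt {src a} = outStar a := by
  ext e
  obtain ⟨a', b, rfl⟩ := exists_edge_eq e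
  simp [edge_mem_cutAt]

lemma cutAt_snk (b : Fin n) : (layeredD m n 0).cutAt {snk b} = inStar b := by
  ext e
  obtain ⟨a, b', rfl⟩ := exists_edge_eq e
  simp [edge_mem_cutAt]

lemma isCut_outStar (hn : 0 < n) (a : Fin m) : (layeredD m n 0).IsCut (outStar a) :=
  ⟨⟨edge a ⟨0, hn⟩, edge_mem_outStar.mpr rfl⟩, {src a}, (cutAt_src a).symm⟩

lemma isCut_inStar (hm : 0 < m) (b : Fin n) : (layeredD m n 0).IsCut (inStar b) :=
  ⟨⟨edge ⟨0, hm⟩ b, edge_mem_inStar.mpr rfl⟩, {snk b}, (cutAt_snk b).symm⟩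

lemma isDirectedCut_outStar (hn : 0 < n) (a : Fin m) :
    (layeredD m n 0).IsDirectedCut (outStar a) := by
  refine ⟨(isCut_outStar hn a).1, {src a}, (cutAt_src a).symm, fun e ⟨_, he⟩ => ?_⟩
  obtain ⟨a', b, rfl⟩ := exists_edge_eq e
  exact snk_ne_src a b he

lemma isDirectedCut_inStar (hm : 0 < m) (b : Fin n) :
    (layeredD m n 0).IsDirectedCut (inStar b) := by
  refine ⟨(isCut_inStar hm b).1, {snk b}ᶜ, ?_, fun e ⟨he, _⟩ => ?_⟩
  · rw [cutAt_compl, cutAt_snk]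
  · obtain ⟨a, b', rfl⟩ := exists_edge_eq e
    exact src_ne_snk a b (not_not.mp he)

lemma isBond_outStar (hm : 2 ≤ m) (hn : 0 < n) (a₀ : Fin m) :
    (layeredD m n 0).IsBond (outStar a₀) := by
  refine ⟨isCut_outStar hn a₀, ?_⟩
  rintro _ ⟨⟨e, he⟩, X, rfl⟩ hsub
  obtain ⟨a, b₀, rfl⟩ := exists_edge_eq e
  obtain rfl : a = a₀ := edge_mem_outStar.mp (hsub he)
  have : Nontrivial (Fin m) := Fin.nontrivial_iff_two_le.mpr hm
  obtain ⟨a₁, ha₁⟩ := exists_ne a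
  have hside : ∀ b, ¬(src a₁ ∈ X ↔ snk b ∉ X) := fun b h =>
    ha₁ (edge_mem_outStar.mp (hsub (edge_mem_cutAt.mpr h)))
  refine hsub.antisymm ?_
  rintro _ ⟨b, rfl⟩
  rw [edge_mem_cutAt] at he ⊢
  have := hside b
  have := hside b₀
  tauto

lemma isBond_inStar (hm : 0 < m) (hn : 2 ≤ n) (b₀ : Fin n) :
    (layeredD m n 0).IsBond (inStar b₀) := by
  refine ⟨isCut_inStar hm b₀, ?_⟩
  rintro _ ⟨⟨e, he⟩, X, rfl⟩ hsub
  obtain ⟨a₀, b, rfl⟩ := exists_edge_eq e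
  obtain rfl : b = b₀ := edge_mem_inStar.mp (hsub he)
  have : Nontrivial (Fin n) := Fin.nontrivial_iff_two_le.mpr hn
  obtain ⟨b₁, hb₁⟩ := exists_ne b
  have hside : ∀ a, ¬(src a ∈ X ↔ snk b₁ ∉ X) := fun a h =>
    hb₁ (edge_mem_inStar.mp (hsub (edge_mem_cutAt.mpr h)))
  refine hsub.antisymm ?_
  rintro _ ⟨a, rfl⟩
  rw [edge_mem_cutAt] at he ⊢
  have := hside a
  have := hside a₀
  tauto

lemma exists_eq_outStar_or_inStar_of_isDirectedBond {S : Set (layeredD m n 0).E}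
    (hS : (layeredD m n 0).IsDirectedBond S) : (∃ a, S = outStar a) ∨ ∃ b, S = inStar b := by
  obtain ⟨⟨-, hmin⟩, ⟨e, he⟩, X, rfl, hdir⟩ := hS
  obtain ⟨a, b, rfl⟩ := exists_edge_eq e
  rw [edge_mem_cutAt] at he
  by_cases hall : ∀ a', src a' ∈ X
  · refine .inr ⟨b, (hmin _ (isCut_inStar a.pos b) ?_).symm⟩
    rintro _ ⟨a', rfl⟩
    rw [edge_mem_cutAt]
    have := hall a
    have := hall a'
    tauto
  · obtain ⟨a₁, ha₁⟩ := not_forall.mp hall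
    have hsnk : ∀ b', snk b' ∉ X := fun b' h => hdir (edge a₁ b') ⟨ha₁, h⟩
    refine .inl ⟨a, (hmin _ (isCut_outStar b.pos a) ?_).symm⟩
    rintro _ ⟨b', rfl⟩
    rw [edge_mem_cutAt]
    have := hsnk b
    have := hsnk b'
    tauto

lemma ncard_inter_outStar (J : Set (layeredD m n 0).E) [DecidablePred (· ∈ J)] (a : Fin m) :
    (J ∩ outStar a).ncard = #{b | edge a b ∈ J} := by
  rw [outStar, ← Set.image_preimage_eq_inter_range,
    Set.ncard_image_of_injective _ fun b b' h => (edge_inj.mp h).2, ← Set.ncard_coe_finset]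
  congr 1
  ext
  simp

lemma ncard_inter_inStar (J : Set (layeredD m n 0).E) [DecidablePred (· ∈ J)] (b : Fin n) :
    (J ∩ inStar b).ncard = #{a | edge a b ∈ J} := by
  rw [inStar, ← Set.image_preimage_eq_inter_range,
    Set.ncard_image_of_injective _ fun a a' h => (edge_inj.mp h).1, ← Set.ncard_coe_finset]
  congr 1
  ext
  simp

lemma ncard_outStar (a : Fin m) : (outStar a : Set (layeredD m n 0).E).ncard = n := by
  simpa using ncard_inter_outStar Set.univ a

lemma ncard_inStar (b : Fin n) : (inStar b : Set (layeredD m n 0).E).ncard = m := by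
  simpa using ncard_inter_inStar Set.univ b

lemma eq_one_of_isBond_outStar {a : Fin m} (h : (layeredD m n 0).IsBond (outStar a))
    (hm : m = 1) : n = 1 := by
  obtain ⟨⟨⟨e, he⟩, -⟩, hmin⟩ := h
  obtain ⟨a', b, rfl⟩ := exists_edge_eq e
  subst hm
  have hstar : inStar b = outStar a := hmin _ (isCut_inStar Nat.one_pos b)
    fun _ ⟨a'', h⟩ => h ▸ edge_mem_outStar.mpr (Subsingleton.elim _ _)
  simpa [ncard_outStar, ncard_inStar] using congrArg Set.ncard hstar.symm

lemma eq_one_of_isBond_inStar {b : Fin n} (h : (layeredD m n 0).IsBond (inStar b))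
    (hn : n = 1) : m = 1 := by
  obtain ⟨⟨⟨e, he⟩, -⟩, hmin⟩ := h
  obtain ⟨a, b', rfl⟩ := exists_edge_eq e
  subst hn
  have hstar : outStar a = inStar b := hmin _ (isCut_outStar Nat.one_pos a)
    fun _ ⟨b'', h⟩ => h ▸ edge_mem_inStar.mpr (Subsingleton.elim _ _)
  simpa [ncard_outStar, ncard_inStar] using congrArg Set.ncard hstar.symm

lemma mod_two_eq_of_isOddDijoin (hm : 2 ≤ m) (hn : 2 ≤ n) {J : Set (layeredD m n 0).E}
    (hJ : (layeredD m n 0).IsOddDijoin J) : m % 2 = n % 2 := by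
  classical
  have hout (a : Fin m) : Odd #{b | edge a b ∈ J} := ncard_inter_outStar J a ▸
    hJ _ ⟨isBond_outStar hm (by omega) a, isDirectedCut_outStar (by omega) a⟩
  have hin (b : Fin n) : Odd #{a | edge a b ∈ J} := ncard_inter_inStar J b ▸
    hJ _ ⟨isBond_inStar (by omega) hn b, isDirectedCut_inStar (by omega) b⟩
  simpa using Fintype.card_mod_two_eq_of_odd_rows_cols (fun a b => edge a b ∈ J) hout hin

lemma isOddDijoin_univ (h : min m n ≤ 1 ∨ (Odd m ∧ Odd n)) :
    (layeredD m n 0).IsOddDijoin Set.univ := by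
  intro S hS
  obtain ⟨a, b, -⟩ := exists_edge_eq hS.2.1.some
  have := a.pos
  have := b.pos
  rw [Set.univ_inter, Nat.odd_iff]
  simp only [Nat.odd_iff] at h
  rcases exists_eq_outStar_or_inStar_of_isDirectedBond hS with ⟨_, rfl⟩ | ⟨_, rfl⟩
  · have := eq_one_of_isBond_outStar hS.1
    rw [ncard_outStar]
    omega
  · have := eq_one_of_isBond_inStar hS.1
    rw [ncard_inStar]
    omega

lemma isOddDijoin_outStar_symmDiff_inStar (hm : Even m) (hn : Even n)
    (a₀ : Fin m) (b₀ : Fin n) : (layeredD m n 0).IsOddDijoin (outStar a₀ ∆ inStar b₀) := by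
  classical
  intro S hS
  rcases exists_eq_outStar_or_inStar_of_isDirectedBond hS with ⟨a, rfl⟩ | ⟨b, rfl⟩
  · rw [ncard_inter_outStar]
    by_cases ha : a = a₀
    · simpa [Set.mem_symmDiff, ha, Finset.filter_ne'] using Nat.Even.sub_odd b₀.pos hn odd_one
    · simp [Set.mem_symmDiff, ha, Finset.filter_eq']
  · rw [ncard_inter_inStar]
    by_cases hb : b = b₀
    · simpa [Set.mem_symmDiff, hb, Finset.filter_ne'] using Nat.Even.sub_odd a₀.pos hm odd_one
    · simp [Set.mem_symmDiff, hb, Finset.filter_eq']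

end layeredD

theorem stmt16_general (n₁ n₂ : ℕ) :
    (layeredD n₁ n₂ 0).HasOddDijoin ↔
      (min n₁ n₂ ≤ 1 ∨ (2 ≤ n₁ ∧ 2 ≤ n₂ ∧ n₁ % 2 = n₂ % 2)) := by
  constructor
  · rintro ⟨J, hJ⟩
    by_contra h
    have hm : 2 ≤ n₁ := by omega
    have hn : 2 ≤ n₂ := by omega
    exact h (.inr ⟨hm, hn, layeredD.mod_two_eq_of_isOddDijoin hm hn hJ⟩)
  · intro h
    by_cases hu : min n₁ n₂ ≤ 1 ∨ (Odd n₁ ∧ Odd n₂)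
    · exact ⟨_, layeredD.isOddDijoin_univ hu⟩
    · simp only [← Nat.not_even_iff_odd, Nat.even_iff] at hu
      have hm : n₁ % 2 = 0 ∧ 0 < n₁ := by omega
      have hn : n₂ % 2 = 0 ∧ 0 < n₂ := by omega
      exact ⟨_, layeredD.isOddDijoin_outStar_symmDiff_inStar (Nat.even_iff.mpr hm.1)
        (Nat.even_iff.mpr hn.1) ⟨0, hm.2⟩ ⟨0, hn.2⟩⟩

theorem stmt16 (n₁ n₂ : ℕ) (h₁ : 1 ≤ n₁) (h₂ : 1 ≤ n₂) :
    (layeredD n₁ n₂ 0).HasOddDijoin ↔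
      (min n₁ n₂ ≤ 1 ∨ (2 ≤ n₁ ∧ 2 ≤ n₂ ∧ n₁ % 2 = n₂ % 2)) :=
  stmt16_general n₁ n₂
end

section
/- Let n₁, n₂, n₃ ≥ 1 be integers. Then 𝒟(n₁,n₂,n₃) has an odd dijoin if and only if one of the following holds: (i) n₂ = 1; (ii) n₂ = 2 and n₁ ≡ n₃ (mod 2); (iii) n₂ ≥ 3 and n₁ ≡ n₃ ≡ 1 (mod 2). -/
open Relation

/-! The directed bonds of `𝒟(n₁,n₂,n₃)` are the stars of the vertices of `V₀` and `V₂` and the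
cuts `δ⁺(V₀ ∪ T)` with `∅ ≠ T ⊊ V₁`. Over `𝔽₂`, the parity of `|J ∩ S|` is linear in the
indicator vector of `S`. The stars of `V₀` add up to `δ⁺(V₀)`, those of `V₂` to `δ⁺(V₀ ∪ V₁)`, and
`δ⁺(V₀ ∪ T) + δ⁺(V₀ ∪ T') = δ⁺(V₀ ∪ (T ∆ T')) + δ⁺(V₀)`. For an odd dijoin, `T' = V₁ ∖ T` gives
`n₁ ≡ n₃` as soon as `n₂ ≥ 2`, and two singletons `T, T'` missing a third vertex give `n₁` odd as
soon as `n₂ ≥ 3`.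

Conversely, let every vertex `a` of `V₀` keep one out-edge `a → f a` and every vertex `c` of `V₂`
one in-edge `g c → c`. This meets every star once and `δ⁺(V₀ ∪ T)` in
`#{a | f a ∉ T} + #{c | g c ∈ T}` edges. Constant `f = g` works when `n₁, n₃` are odd or `n₂ = 1`;
for `n₂ = 2` and `n₁, n₃` even, redirect a single vertex of `V₀`. -/

theorem odd_ncard_inter_iff {α : Type} [Fintype α] (J S : Set α) :
    Odd (J ∩ S).ncard ↔ eindicator J ⬝ᵥ eindicator S = 1 := by
  classical
  rw [← ZMod.natCast_eq_one_iff_odd, Set.ncard_eq_toFinset_card']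
  simp [dotProduct, eindicator, Set.indicator, ← ite_and, Finset.sum_boole]
  congr! 3
  ext
  simp [and_comm]

theorem eindicator_apply {α : Type} (S : Set α) (x : α) [Decidable (x ∈ S)] :
    eindicator S x = if x ∈ S then 1 else 0 := by
  simp [eindicator, Set.indicator_apply]

namespace MultiDigraph

variable {D : MultiDigraph}

theorem mem_cutAt_iff {X : Set D.V} {e : D.E} :
    e ∈ D.cutAt X ↔ ¬(D.tail e ∈ X ↔ D.head e ∈ X) := by
  simp only [cutAt, Set.mem_ofPred_eq]
  tauto

def shoreStep (X : Set D.V) (u v : D.V) : Prop := (u ∈ X ↔ v ∈ X) ∧ D.dstep u v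

theorem isBond_cutAt {X : Set D.V} (hne : (D.cutAt X).Nonempty)
    (hconn : ∀ u v, (u ∈ X ↔ v ∈ X) → EqvGen (D.shoreStep X) u v) :
    D.IsBond (D.cutAt X) := by
  refine ⟨⟨hne, X, rfl⟩, ?_⟩
  rintro _ ⟨⟨e, he⟩, Y, rfl⟩ hsub
  have hY : ∀ u v, EqvGen (D.shoreStep X) u v → (u ∈ Y ↔ v ∈ Y) := by
    intro u v huv
    induction huv with
    | rel _ _ hab =>
      obtain ⟨hX, f, rfl, rfl⟩ := hab
      by_contra hf
      exact mem_cutAt_iff.1 (hsub (mem_cutAt_iff.2 hf)) hX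
    | refl => exact Iff.rfl
    | symm _ _ _ ih => exact ih.symm
    | trans _ _ _ _ _ ih₁ ih₂ => exact ih₁.trans ih₂
  have heX := mem_cutAt_iff.1 (hsub he)
  have heY := mem_cutAt_iff.1 he
  -- Both shores lie on one side of `Y` each, and `e` separates them, so `Y` is `X` or `Xᶜ`.
  have key : ∀ u, u ∈ Y ↔ (u ∈ X ↔ (D.tail e ∈ Y ↔ D.tail e ∈ X)) := by
    intro u
    by_cases hu : u ∈ X ↔ D.tail e ∈ X
    · have := hY _ _ (hconn _ _ hu)
      tauto
    · have := hY u (D.head e) (hconn _ _ (by tauto))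
      tauto
  ext f
  rw [mem_cutAt_iff, mem_cutAt_iff, key (D.tail f), key (D.head f)]
  tauto

theorem eqvGen_shoreStep {X : Set D.V} (e : D.E) (h : D.tail e ∈ X ↔ D.head e ∈ X) :
    EqvGen (D.shoreStep X) (D.tail e) (D.head e) :=
  EqvGen.rel _ _ ⟨h, e, rfl, rfl⟩

theorem eqvGen_shoreStep_of_hubs {X : Set D.V} (x y : D.V)
    (hx : ∀ v ∈ X, EqvGen (D.shoreStep X) v x) (hy : ∀ v ∉ X, EqvGen (D.shoreStep X) v y)
    (u v : D.V) (huv : u ∈ X ↔ v ∈ X) : EqvGen (D.shoreStep X) u v := by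
  by_cases hu : u ∈ X
  · exact (hx u hu).trans _ _ _ ((hx v (huv.1 hu)).symm _ _)
  · exact (hy u hu).trans _ _ _ ((hy v (huv.not.1 hu)).symm _ _)

theorem isDirectedBond_cutAt {X : Set D.V} (hne : (D.cutAt X).Nonempty)
    (hin : ∀ e, D.head e ∈ X → D.tail e ∈ X)
    (hconn : ∀ u v, (u ∈ X ↔ v ∈ X) → EqvGen (D.shoreStep X) u v) :
    D.IsDirectedBond (D.cutAt X) :=
  ⟨isBond_cutAt hne hconn, hne, X, rfl, fun e he => he.1 (hin e he.2)⟩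

end MultiDigraph

namespace layeredD

open MultiDigraph Finset

variable {n₁ n₂ n₃ : ℕ}

-- `(layeredD n₁ n₂ n₃).V` and `.E` are sum types only after unfolding `layeredD`, which `simp`
-- does not do, so vertices and edges are handled through these names and the eliminators below.
def v₀ (a : Fin n₁) : (layeredD n₁ n₂ n₃).V := Sum.inl (Sum.inl a)

def v₁ (b : Fin n₂) : (layeredD n₁ n₂ n₃).V := Sum.inl (Sum.inr b)

def v₂ (c : Fin n₃) : (layeredD n₁ n₂ n₃).V := Sum.inr c

def e₀₁ (a : Fin n₁) (b : Fin n₂) : (layeredD n₁ n₂ n₃).E := Sum.inl (a, b)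

def e₁₂ (b : Fin n₂) (c : Fin n₃) : (layeredD n₁ n₂ n₃).E := Sum.inr (b, c)

@[simp] theorem tail_e₀₁ (a : Fin n₁) (b : Fin n₂) :
    (layeredD n₁ n₂ n₃).tail (e₀₁ a b) = v₀ a := rfl

@[simp] theorem head_e₀₁ (a : Fin n₁) (b : Fin n₂) :
    (layeredD n₁ n₂ n₃).head (e₀₁ a b) = v₁ b := rfl

@[simp] theorem tail_e₁₂ (b : Fin n₂) (c : Fin n₃) :
    (layeredD n₁ n₂ n₃).tail (e₁₂ b c) = v₁ b := rfl

@[simp] theorem head_e₁₂ (b : Fin n₂) (c : Fin n₃) :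
    (layeredD n₁ n₂ n₃).head (e₁₂ b c) = v₂ c := rfl

theorem forall_vertex {P : (layeredD n₁ n₂ n₃).V → Prop} :
    (∀ v, P v) ↔ (∀ a, P (v₀ a)) ∧ (∀ b, P (v₁ b)) ∧ ∀ c, P (v₂ c) :=
  ⟨fun h => ⟨fun _ => h _, fun _ => h _, fun _ => h _⟩, fun ⟨h₀, h₁, h₂⟩ v =>
    match v with
    | .inl (.inl a) => h₀ a
    | .inl (.inr b) => h₁ b
    | .inr c => h₂ c⟩

theorem forall_edge {P : (layeredD n₁ n₂ n₃).E → Prop} :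
    (∀ e, P e) ↔ (∀ a b, P (e₀₁ a b)) ∧ ∀ b c, P (e₁₂ b c) :=
  ⟨fun h => ⟨fun _ _ => h _, fun _ _ => h _⟩, fun ⟨h₀₁, h₁₂⟩ e =>
    match e with
    | .inl (a, b) => h₀₁ a b
    | .inr (b, c) => h₁₂ b c⟩

theorem exists_edge {P : (layeredD n₁ n₂ n₃).E → Prop} :
    (∃ e, P e) ↔ (∃ a b, P (e₀₁ a b)) ∨ ∃ b c, P (e₁₂ b c) := by
  simpa [or_iff_not_imp_left] using (forall_edge (P := (¬ P ·))).not

theorem sum_edge {M : Type*} [AddCommMonoid M] (f : (layeredD n₁ n₂ n₃).E → M) :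
    ∑ e, f e = ∑ a, ∑ b, f (e₀₁ a b) + ∑ b, ∑ c, f (e₁₂ b c) :=
  (Fintype.sum_sum_type f).trans (by simp only [Fintype.sum_prod_type]; rfl)

def vertexSet (P₀ : Fin n₁ → Prop) (P₁ : Fin n₂ → Prop) (P₂ : Fin n₃ → Prop) :
    Set (layeredD n₁ n₂ n₃).V :=
  {v | Sum.elim (Sum.elim P₀ P₁) P₂ v}

def edgeSet (Q₀₁ : Fin n₁ → Fin n₂ → Prop) (Q₁₂ : Fin n₂ → Fin n₃ → Prop) :
    Set (layeredD n₁ n₂ n₃).E :=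
  {e | Sum.elim (fun p => Q₀₁ p.1 p.2) (fun p => Q₁₂ p.1 p.2) e}

section Membership

variable {P₀ : Fin n₁ → Prop} {P₁ : Fin n₂ → Prop} {P₂ : Fin n₃ → Prop}
  {Q₀₁ : Fin n₁ → Fin n₂ → Prop} {Q₁₂ : Fin n₂ → Fin n₃ → Prop}

@[simp] theorem v₀_mem_vertexSet {a : Fin n₁} : v₀ a ∈ vertexSet P₀ P₁ P₂ ↔ P₀ a := Iff.rfl

@[simp] theorem v₁_mem_vertexSet {b : Fin n₂} : v₁ b ∈ vertexSet P₀ P₁ P₂ ↔ P₁ b := Iff.rfl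

@[simp] theorem v₂_mem_vertexSet {c : Fin n₃} : v₂ c ∈ vertexSet P₀ P₁ P₂ ↔ P₂ c := Iff.rfl

@[simp] theorem e₀₁_mem_edgeSet {a : Fin n₁} {b : Fin n₂} :
    e₀₁ a b ∈ edgeSet Q₀₁ Q₁₂ ↔ Q₀₁ a b := Iff.rfl

@[simp] theorem e₁₂_mem_edgeSet {b : Fin n₂} {c : Fin n₃} :
    e₁₂ b c ∈ edgeSet Q₀₁ Q₁₂ ↔ Q₁₂ b c := Iff.rfl

end Membership

theorem vertexSet_mem (X : Set (layeredD n₁ n₂ n₃).V) :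
    vertexSet (v₀ · ∈ X) (v₁ · ∈ X) (v₂ · ∈ X) = X := by
  ext v; revert v
  simp [forall_vertex]

theorem edgeSet_subset_edgeSet {Q₀₁ Q₀₁' : Fin n₁ → Fin n₂ → Prop}
    {Q₁₂ Q₁₂' : Fin n₂ → Fin n₃ → Prop} :
    edgeSet Q₀₁ Q₁₂ ⊆ edgeSet Q₀₁' Q₁₂' ↔
      (∀ a b, Q₀₁ a b → Q₀₁' a b) ∧ ∀ b c, Q₁₂ b c → Q₁₂' b c := by
  simp only [Set.subset_def, forall_edge, e₀₁_mem_edgeSet, e₁₂_mem_edgeSet]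

theorem cutAt_vertexSet (P₀ : Fin n₁ → Prop) (P₁ : Fin n₂ → Prop) (P₂ : Fin n₃ → Prop) :
    (layeredD n₁ n₂ n₃).cutAt (vertexSet P₀ P₁ P₂) =
      edgeSet (fun a b => ¬(P₀ a ↔ P₁ b)) (fun b c => ¬(P₁ b ↔ P₂ c)) := by
  ext e; revert e
  simp [forall_edge, mem_cutAt_iff]

theorem cutAt_eq_edgeSet (X : Set (layeredD n₁ n₂ n₃).V) :
    (layeredD n₁ n₂ n₃).cutAt X =
      edgeSet (fun a b => ¬(v₀ a ∈ X ↔ v₁ b ∈ X)) (fun b c => ¬(v₁ b ∈ X ↔ v₂ c ∈ X)) := by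
  rw [← cutAt_vertexSet, vertexSet_mem]

def sourceStar (a : Fin n₁) : Set (layeredD n₁ n₂ n₃).E :=
  edgeSet (fun a' _ => a' = a) (fun _ _ => False)

def sinkStar (c : Fin n₃) : Set (layeredD n₁ n₂ n₃).E :=
  edgeSet (fun _ _ => False) (fun _ c' => c' = c)

/-- The cut `δ⁺(V₀ ∪ T)`. -/
def middleCut (T : Set (Fin n₂)) : Set (layeredD n₁ n₂ n₃).E :=
  edgeSet (fun _ b => b ∉ T) (fun b _ => b ∈ T)

section Shores

variable {X : Set (layeredD n₁ n₂ n₃).V}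

theorem eqvGen_v₀_v₁ {a : Fin n₁} {b : Fin n₂} (h : v₀ a ∈ X ↔ v₁ b ∈ X) :
    EqvGen ((layeredD n₁ n₂ n₃).shoreStep X) (v₀ a) (v₁ b) :=
  eqvGen_shoreStep (e₀₁ a b) h

theorem eqvGen_v₁_v₂ {b : Fin n₂} {c : Fin n₃} (h : v₁ b ∈ X ↔ v₂ c ∈ X) :
    EqvGen ((layeredD n₁ n₂ n₃).shoreStep X) (v₁ b) (v₂ c) :=
  eqvGen_shoreStep (e₁₂ b c) h

end Shores

theorem isDirectedBond_sourceStar (h₂ : 1 ≤ n₂) (h₃ : 1 ≤ n₃) (a : Fin n₁) :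
    (layeredD n₁ n₂ n₃).IsDirectedBond (sourceStar a) := by
  let b₀ : Fin n₂ := ⟨0, h₂⟩
  let c₀ : Fin n₃ := ⟨0, h₃⟩
  have hX : sourceStar a =
      (layeredD n₁ n₂ n₃).cutAt (vertexSet (· = a) (fun _ => False) (fun _ => False)) := by
    simp [sourceStar, cutAt_vertexSet]
  rw [hX]
  refine isDirectedBond_cutAt ⟨e₀₁ a b₀, by simp [cutAt_vertexSet]⟩ (by simp [forall_edge])
    (eqvGen_shoreStep_of_hubs (v₀ a) (v₁ b₀) ?_ ?_)
  · simp only [forall_vertex]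
    refine ⟨?_, by simp, by simp⟩
    rintro a' (rfl : a' = a)
    exact EqvGen.refl _
  · simp only [forall_vertex, v₀_mem_vertexSet, v₁_mem_vertexSet, v₂_mem_vertexSet]
    refine ⟨fun a' _ => eqvGen_v₀_v₁ (by simp_all), fun b _ => ?_, fun c _ => ?_⟩
    · exact (eqvGen_v₁_v₂ (c := c₀) (by simp)).trans _ _ _
        ((eqvGen_v₁_v₂ (by simp)).symm _ _)
    · exact (eqvGen_v₁_v₂ (by simp)).symm _ _

theorem isDirectedBond_sinkStar (h₁ : 1 ≤ n₁) (h₂ : 1 ≤ n₂) (c : Fin n₃) :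
    (layeredD n₁ n₂ n₃).IsDirectedBond (sinkStar c) := by
  let a₀ : Fin n₁ := ⟨0, h₁⟩
  let b₀ : Fin n₂ := ⟨0, h₂⟩
  have hX : sinkStar c =
      (layeredD n₁ n₂ n₃).cutAt (vertexSet (fun _ => True) (fun _ => True) (· ≠ c)) := by
    simp [sinkStar, cutAt_vertexSet]
  rw [hX]
  refine isDirectedBond_cutAt ⟨e₁₂ b₀ c, by simp [cutAt_vertexSet]⟩ (by simp [forall_edge])
    (eqvGen_shoreStep_of_hubs (v₁ b₀) (v₂ c) ?_ ?_)
  · simp only [forall_vertex, v₀_mem_vertexSet, v₁_mem_vertexSet, v₂_mem_vertexSet]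
    refine ⟨fun a _ => eqvGen_v₀_v₁ (by simp), fun b _ => ?_, fun c' hc' => ?_⟩
    · exact ((eqvGen_v₀_v₁ (a := a₀) (by simp)).symm _ _).trans _ _ _
        (eqvGen_v₀_v₁ (by simp))
    · exact (eqvGen_v₁_v₂ (by simp [hc'])).symm _ _
  · simp only [forall_vertex, v₀_mem_vertexSet, v₁_mem_vertexSet, v₂_mem_vertexSet]
    refine ⟨by simp, by simp, ?_⟩
    rintro c' hc'
    rw [not_not.1 hc']
    exact EqvGen.refl _

theorem isDirectedBond_middleCut (h₁ : 1 ≤ n₁) (h₃ : 1 ≤ n₃) {T : Set (Fin n₂)}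
    (hT : T.Nonempty) (hTu : T ≠ Set.univ) :
    (layeredD n₁ n₂ n₃).IsDirectedBond (middleCut T) := by
  let a₀ : Fin n₁ := ⟨0, h₁⟩
  let c₀ : Fin n₃ := ⟨0, h₃⟩
  obtain ⟨t, ht⟩ := hT
  obtain ⟨s, hs⟩ := (Set.ne_univ_iff_exists_notMem T).1 hTu
  have hX : middleCut T =
      (layeredD n₁ n₂ n₃).cutAt (vertexSet (fun _ => True) (· ∈ T) (fun _ => False)) := by
    simp [middleCut, cutAt_vertexSet]
  rw [hX]
  refine isDirectedBond_cutAt ⟨e₁₂ t c₀, by simp [cutAt_vertexSet, ht]⟩ (by simp [forall_edge])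
    (eqvGen_shoreStep_of_hubs (v₁ t) (v₂ c₀) ?_ ?_)
  · simp only [forall_vertex, v₀_mem_vertexSet, v₁_mem_vertexSet, v₂_mem_vertexSet]
    refine ⟨fun a _ => eqvGen_v₀_v₁ (by simp [ht]), fun b hb => ?_, by simp⟩
    exact ((eqvGen_v₀_v₁ (a := a₀) (by simp [hb])).symm _ _).trans _ _ _
      (eqvGen_v₀_v₁ (by simp [ht]))
  · simp only [forall_vertex, v₀_mem_vertexSet, v₁_mem_vertexSet, v₂_mem_vertexSet]
    refine ⟨by simp, fun b hb => eqvGen_v₁_v₂ (by simp [hb]), fun c _ => ?_⟩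
    exact ((eqvGen_v₁_v₂ (b := s) (by simp [hs])).symm _ _).trans _ _ _
      (eqvGen_v₁_v₂ (by simp [hs]))

theorem eq_of_isDirectedBond (h₁ : 1 ≤ n₁) (h₂ : 1 ≤ n₂) (h₃ : 1 ≤ n₃)
    {S : Set (layeredD n₁ n₂ n₃).E} (hS : (layeredD n₁ n₂ n₃).IsDirectedBond S) :
    (∃ a, S = sourceStar a) ∨ (∃ c, S = sinkStar c) ∨
      ∃ T : Set (Fin n₂), T.Nonempty ∧ T ≠ Set.univ ∧ S = middleCut T := by
  obtain ⟨⟨-, hmin⟩, hne, X, rfl, hin⟩ := hS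
  -- `X` is closed under predecessors; in each case some candidate lies inside `cutAt X`.
  have eq_of_subset : ∀ K, (layeredD n₁ n₂ n₃).IsDirectedBond K →
      K ⊆ (layeredD n₁ n₂ n₃).cutAt X → (layeredD n₁ n₂ n₃).cutAt X = K :=
    fun K hK hsub => (hmin K hK.1.1 hsub).symm
  simp only [forall_edge, tail_e₀₁, head_e₀₁, tail_e₁₂, head_e₁₂, not_and, not_imp_not] at hin
  obtain ⟨h₀₁, h₁₂⟩ := hin
  rw [cutAt_eq_edgeSet] at hne eq_of_subset ⊢
  by_cases hB : ∀ b, v₁ b ∈ X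
  · have hA : ∀ a, v₀ a ∈ X := fun a => h₀₁ a ⟨0, h₂⟩ (hB _)
    obtain ⟨c, hc⟩ : ∃ c, v₂ c ∉ X := by
      rcases exists_edge.1 hne with ⟨a, b, h⟩ | ⟨b, c, h⟩
      · simp [hA, hB] at h
      · exact ⟨c, by simpa [hB] using h⟩
    refine Or.inr (Or.inl ⟨c, eq_of_subset _ (isDirectedBond_sinkStar h₁ h₂ c) ?_⟩)
    simp [sinkStar, edgeSet_subset_edgeSet, hB, hc]
  push Not at hB
  obtain ⟨s, hs⟩ := hB
  have hC : ∀ c, v₂ c ∉ X := fun c hc => hs (h₁₂ s c hc)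
  by_cases hT : ∃ b, v₁ b ∈ X
  · obtain ⟨t, ht⟩ := hT
    have hA : ∀ a, v₀ a ∈ X := fun a => h₀₁ a t ht
    have hTu : {b | v₁ b ∈ X} ≠ Set.univ := fun h => hs (Set.eq_univ_iff_forall.1 h s)
    refine Or.inr (Or.inr ⟨_, ⟨t, ht⟩, hTu,
      eq_of_subset _ (isDirectedBond_middleCut h₁ h₃ ⟨t, ht⟩ hTu) ?_⟩)
    simp [middleCut, hA, hC]
  · push Not at hT
    obtain ⟨a, ha⟩ : ∃ a, v₀ a ∈ X := by
      rcases exists_edge.1 hne with ⟨a, b, h⟩ | ⟨b, c, h⟩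
      · exact ⟨a, by simpa [hT] using h⟩
      · simp [hT, hC] at h
    refine Or.inl ⟨a, eq_of_subset _ (isDirectedBond_sourceStar h₂ h₃ a) ?_⟩
    simp [sourceStar, edgeSet_subset_edgeSet, ha, hT]

theorem isDirectedBond_iff (h₁ : 1 ≤ n₁) (h₂ : 1 ≤ n₂) (h₃ : 1 ≤ n₃)
    {S : Set (layeredD n₁ n₂ n₃).E} :
    (layeredD n₁ n₂ n₃).IsDirectedBond S ↔
      (∃ a, S = sourceStar a) ∨ (∃ c, S = sinkStar c) ∨
        ∃ T : Set (Fin n₂), T.Nonempty ∧ T ≠ Set.univ ∧ S = middleCut T := by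
  refine ⟨eq_of_isDirectedBond h₁ h₂ h₃, ?_⟩
  rintro (⟨a, rfl⟩ | ⟨c, rfl⟩ | ⟨T, hT, hTu, rfl⟩)
  · exact isDirectedBond_sourceStar h₂ h₃ a
  · exact isDirectedBond_sinkStar h₁ h₂ c
  · exact isDirectedBond_middleCut h₁ h₃ hT hTu

theorem sum_eindicator_sourceStar :
    ∑ a, eindicator (sourceStar a : Set (layeredD n₁ n₂ n₃).E) = eindicator (middleCut ∅) := by
  classical
  refine funext (forall_edge.2 ⟨fun a b => ?_, fun b c => ?_⟩) <;>
    simp [Finset.sum_apply, eindicator_apply, sourceStar, middleCut]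

theorem sum_eindicator_sinkStar :
    ∑ c, eindicator (sinkStar c : Set (layeredD n₁ n₂ n₃).E) = eindicator (middleCut Set.univ) := by
  classical
  refine funext (forall_edge.2 ⟨fun a b => ?_, fun b c => ?_⟩) <;>
    simp [Finset.sum_apply, eindicator_apply, sinkStar, middleCut]

theorem eindicator_middleCut_add (T T' : Set (Fin n₂)) :
    eindicator (middleCut T : Set (layeredD n₁ n₂ n₃).E) + eindicator (middleCut T') =
      eindicator (middleCut (symmDiff T T')) + eindicator (middleCut ∅) := by
  classical
  refine funext (forall_edge.2 ⟨fun a b => ?_, fun b c => ?_⟩) <;>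
    by_cases hb : b ∈ T <;> by_cases hb' : b ∈ T' <;>
    simp [eindicator_apply, middleCut, Set.mem_symmDiff, hb, hb'] <;> decide

theorem isOddDijoin_iff (h₁ : 1 ≤ n₁) (h₂ : 1 ≤ n₂) (h₃ : 1 ≤ n₃)
    {J : Set (layeredD n₁ n₂ n₃).E} :
    (layeredD n₁ n₂ n₃).IsOddDijoin J ↔
      (∀ a, eindicator J ⬝ᵥ eindicator (sourceStar a) = 1) ∧
        (∀ c, eindicator J ⬝ᵥ eindicator (sinkStar c) = 1) ∧
        ∀ T : Set (Fin n₂), T.Nonempty → T ≠ Set.univ →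
          eindicator J ⬝ᵥ eindicator (middleCut T) = 1 := by
  simp only [IsOddDijoin, isDirectedBond_iff h₁ h₂ h₃, odd_ncard_inter_iff]
  constructor
  · intro h
    exact ⟨fun a => h _ (.inl ⟨a, rfl⟩), fun c => h _ (.inr (.inl ⟨c, rfl⟩)),
      fun T hT hTu => h _ (.inr (.inr ⟨T, hT, hTu, rfl⟩))⟩
  · rintro ⟨hs, hs', hm⟩ S (⟨a, rfl⟩ | ⟨c, rfl⟩ | ⟨T, hT, hTu, rfl⟩)
    exacts [hs a, hs' c, hm T hT hTu]

section Necessity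

variable {x : (layeredD n₁ n₂ n₃).E → ZMod 2}

theorem dotProduct_middleCut_empty (hx : ∀ a, x ⬝ᵥ eindicator (sourceStar a) = 1) :
    x ⬝ᵥ eindicator (middleCut ∅) = n₁ := by
  simp [← sum_eindicator_sourceStar, dotProduct_sum, hx]

theorem dotProduct_middleCut_univ (hx : ∀ c, x ⬝ᵥ eindicator (sinkStar c) = 1) :
    x ⬝ᵥ eindicator (middleCut Set.univ) = n₃ := by
  simp [← sum_eindicator_sinkStar, dotProduct_sum, hx]

theorem mod_two_eq_of_hasOddDijoin (h₁ : 1 ≤ n₁) (h₂ : 2 ≤ n₂) (h₃ : 1 ≤ n₃)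
    (hD : (layeredD n₁ n₂ n₃).HasOddDijoin) : n₁ % 2 = n₃ % 2 := by
  obtain ⟨J, hJ⟩ := hD
  obtain ⟨hs, hs', hm⟩ := (isOddDijoin_iff h₁ (by omega) h₃).1 hJ
  let b : Fin n₂ := ⟨0, by omega⟩
  let b' : Fin n₂ := ⟨1, h₂⟩
  have hbb' : b' ∉ ({b} : Set (Fin n₂)) := by simp [b, b', Fin.ext_iff]
  have key := congrArg (eindicator J ⬝ᵥ ·) (eindicator_middleCut_add {b} {b}ᶜ)
  simp only [dotProduct_add, symmDiff_compl_self, Set.top_eq_univ, dotProduct_middleCut_empty hs,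
    dotProduct_middleCut_univ hs', hm {b} (Set.singleton_nonempty b)
      ((Set.ne_univ_iff_exists_notMem _).2 ⟨b', hbb'⟩),
    hm {b}ᶜ ⟨b', hbb'⟩ ((Set.ne_univ_iff_exists_notMem _).2 ⟨b, by simp⟩)] at key
  rw [← Nat.cast_add, show (1 : ZMod 2) + 1 = 0 from rfl, eq_comm, ZMod.natCast_eq_zero_iff] at key
  omega

theorem odd_of_hasOddDijoin (h₁ : 1 ≤ n₁) (h₂ : 3 ≤ n₂) (h₃ : 1 ≤ n₃)
    (hD : (layeredD n₁ n₂ n₃).HasOddDijoin) : Odd n₁ := by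
  obtain ⟨J, hJ⟩ := hD
  obtain ⟨hs, -, hm⟩ := (isOddDijoin_iff h₁ (by omega) h₃).1 hJ
  let b₀ : Fin n₂ := ⟨0, by omega⟩
  let b₁ : Fin n₂ := ⟨1, by omega⟩
  let b₂ : Fin n₂ := ⟨2, h₂⟩
  have hne : ∀ T : Set (Fin n₂), b₂ ∉ T → T ≠ Set.univ :=
    fun T h => (Set.ne_univ_iff_exists_notMem _).2 ⟨b₂, h⟩
  have key := congrArg (eindicator J ⬝ᵥ ·) (eindicator_middleCut_add {b₀} {b₁})
  simp only [dotProduct_add, dotProduct_middleCut_empty hs,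
    hm {b₀} (Set.singleton_nonempty _) (hne _ (by simp [b₀, b₂, Fin.ext_iff])),
    hm {b₁} (Set.singleton_nonempty _) (hne _ (by simp [b₁, b₂, Fin.ext_iff])),
    hm (symmDiff {b₀} {b₁}) ⟨b₀, by simp [b₀, b₁, Set.mem_symmDiff, Fin.ext_iff]⟩
      (hne _ (by simp [b₀, b₁, b₂, Set.mem_symmDiff, Fin.ext_iff]))] at key
  rw [← ZMod.natCast_eq_one_iff_odd]
  linear_combination -key

end Necessity

def selection (f : Fin n₁ → Fin n₂) (g : Fin n₃ → Fin n₂) : Set (layeredD n₁ n₂ n₃).E :=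
  edgeSet (fun a b => b = f a) (fun b c => b = g c)

open Classical in
theorem hasOddDijoin_of_selection (h₁ : 1 ≤ n₁) (h₂ : 1 ≤ n₂) (h₃ : 1 ≤ n₃)
    (f : Fin n₁ → Fin n₂) (g : Fin n₃ → Fin n₂)
    (hfg : ∀ T : Set (Fin n₂), T.Nonempty → T ≠ Set.univ →
      Odd (#{a | f a ∉ T} + #{c | g c ∈ T})) :
    (layeredD n₁ n₂ n₃).HasOddDijoin := by
  refine ⟨selection f g,
    (isOddDijoin_iff h₁ h₂ h₃).2 ⟨fun a => ?_, fun c => ?_, fun T hT hTu => ?_⟩⟩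
  · simp [dotProduct, sum_edge, eindicator_apply, selection, sourceStar]
  · simp [dotProduct, sum_edge, eindicator_apply, selection, sinkStar]
  · rw [← ZMod.natCast_eq_one_iff_odd.2 (hfg T hT hTu), dotProduct, sum_edge,
      Finset.sum_comm (s := (univ : Finset (Fin n₂))) (t := (univ : Finset (Fin n₃)))]
    simp only [eindicator_apply, selection, middleCut, e₀₁_mem_edgeSet, e₁₂_mem_edgeSet, ite_mul,
      one_mul, zero_mul, Finset.sum_ite_eq', Finset.mem_univ, if_true, Finset.sum_boole]
    push_cast
    congr

theorem hasOddDijoin_of_odd (h₂ : 1 ≤ n₂) (hn₁ : Odd n₁) (hn₃ : Odd n₃) :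
    (layeredD n₁ n₂ n₃).HasOddDijoin := by
  let b : Fin n₂ := ⟨0, h₂⟩
  refine hasOddDijoin_of_selection hn₁.pos h₂ hn₃.pos (fun _ => b) (fun _ => b) fun T _ _ => ?_
  by_cases hb : b ∈ T <;> simpa [hb]

theorem hasOddDijoin_of_middle_eq_one (h₁ : 1 ≤ n₁) (h₃ : 1 ≤ n₃) :
    (layeredD n₁ 1 n₃).HasOddDijoin :=
  hasOddDijoin_of_selection h₁ le_rfl h₃ (fun _ => 0) (fun _ => 0)
    fun _ hT hTu => absurd hT.eq_univ hTu

theorem hasOddDijoin_of_middle_eq_two (h₁ : 1 ≤ n₁) (h₃ : 1 ≤ n₃) (hn₁ : Even n₁)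
    (hn₃ : Even n₃) : (layeredD n₁ 2 n₃).HasOddDijoin := by
  let a₀ : Fin n₁ := ⟨0, h₁⟩
  refine hasOddDijoin_of_selection h₁ (by norm_num) h₃ (fun a => if a = a₀ then 1 else 0)
    (fun _ => 1) fun T hT hTu => ?_
  have h01 : (0 : Fin 2) ∈ T ↔ (1 : Fin 2) ∉ T := by
    obtain ⟨x, hx⟩ := hT
    obtain ⟨y, hy⟩ := (Set.ne_univ_iff_exists_notMem T).1 hTu
    fin_cases x <;> fin_cases y <;> simp_all
  by_cases h1 : (1 : Fin 2) ∈ T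
  · simp [apply_ite (· ∈ T), h1, h01.not_left.2 h1]
    rw [Finset.filter_ne', Finset.card_erase_of_mem (Finset.mem_univ _), Finset.card_univ,
      Fintype.card_fin, Nat.odd_iff]
    rw [Nat.even_iff] at hn₁ hn₃
    omega
  · simp [apply_ite (· ∈ T), h1, h01.2 h1, Finset.filter_eq']

end layeredD

theorem stmt17 (n₁ n₂ n₃ : ℕ) (h₁ : 1 ≤ n₁) (h₂ : 1 ≤ n₂) (h₃ : 1 ≤ n₃) :
    (layeredD n₁ n₂ n₃).HasOddDijoin ↔
      (n₂ = 1 ∨ (n₂ = 2 ∧ n₁ % 2 = n₃ % 2) ∨ (3 ≤ n₂ ∧ n₁ % 2 = 1 ∧ n₃ % 2 = 1)) := by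
  open layeredD in
  constructor
  · intro hD
    obtain rfl | rfl | h : n₂ = 1 ∨ n₂ = 2 ∨ 3 ≤ n₂ := by omega
    · exact .inl rfl
    · exact .inr (.inl ⟨rfl, mod_two_eq_of_hasOddDijoin h₁ le_rfl h₃ hD⟩)
    · have h₁₃ := mod_two_eq_of_hasOddDijoin h₁ (by omega) h₃ hD
      have hn₁ := Nat.odd_iff.1 (odd_of_hasOddDijoin h₁ h h₃ hD)
      exact .inr (.inr ⟨h, hn₁, by omega⟩)
  · rintro (rfl | ⟨rfl, h₁₃⟩ | ⟨-, hn₁, hn₃⟩)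
    · exact hasOddDijoin_of_middle_eq_one h₁ h₃
    · rcases Nat.even_or_odd n₁ with hn₁ | hn₁
      · exact hasOddDijoin_of_middle_eq_two h₁ h₃ hn₁
          (Nat.even_iff.2 (by rw [Nat.even_iff] at hn₁; omega))
      · exact hasOddDijoin_of_odd (by norm_num) hn₁
          (Nat.odd_iff.2 (by rw [Nat.odd_iff] at hn₁; omega))
    · exact hasOddDijoin_of_odd h₂ (Nat.odd_iff.2 hn₁) (Nat.odd_iff.2 hn₃)
end
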